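/- arXiv:2106.08425 — 6 statements merged into one kernel-verified Lean document; each statement's English description precedes it below -/
import Mathlib

section
/- For all integers r ≥ 1 and s ≥ 3, every element of EqC_r^s can be written as z + Σ_{j=1}^{s-1} a_j·x_j where z ∈ EqLR_r^s and a_1,…,a_{s-1} ∈ ℝ. -/
open Matrix Polynomial BigOperators
open scoped ComplexOrder

noncomputable section

/-- A Hermitian `r × r` complex matrix `A` has eigenvalues `μ` (listed with
multiplicity): `A` is Hermitian and its characteristic polynomial is
`∏ i, (X - μ i)`. -/
def HasEigenvalues {r : ℕ} (A : Matrix (Fin r) (Fin r) ℂ) (μ : Fin r → ℝ) : Prop :=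
  A.IsHermitian ∧ A.charpoly = ∏ i, (X - Polynomial.C (μ i : ℂ))

/-- A tuple `(λ¹, …, λ^{s-1}, ν)` of real `r`-sequences. -/
abbrev Tup (r s : ℕ) := (Fin (s - 1) → Fin r → ℝ) × (Fin r → ℝ)

/-- The Hermitian eigencone `C_r^s`: tuples of nonincreasing sequences that are the
eigenvalues of Hermitian matrices `A₁, …, A_{s-1}, C` with `A₁ + ⋯ + A_{s-1} = C`. -/
def memC (r s : ℕ) (x : Tup r s) : Prop :=
  (∀ j, Antitone (x.1 j)) ∧ Antitone x.2 ∧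
  ∃ (A : Fin (s - 1) → Matrix (Fin r) (Fin r) ℂ) (B : Matrix (Fin r) (Fin r) ℂ),
    (∀ j, HasEigenvalues (A j) (x.1 j)) ∧ HasEigenvalues B x.2 ∧ (∑ j, A j) = B

/-- The majorized eigencone `EqC_r^s`: as above but `A₁ + ⋯ + A_{s-1} - C` is
positive semidefinite. -/
def memEqC (r s : ℕ) (x : Tup r s) : Prop :=
  (∀ j, Antitone (x.1 j)) ∧ Antitone x.2 ∧
  ∃ (A : Fin (s - 1) → Matrix (Fin r) (Fin r) ℂ) (B : Matrix (Fin r) (Fin r) ℂ),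
    (∀ j, HasEigenvalues (A j) (x.1 j)) ∧ HasEigenvalues B x.2 ∧ ((∑ j, A j) - B).PosSemidef

/-- The last (`r`-th) entry of an `r`-sequence. -/
def lastEntry {r : ℕ} (μ : Fin r → ℝ) : ℝ :=
  if h : 0 < r then μ ⟨r - 1, by omega⟩ else 0

/-- `LR_r^s = {x ∈ C_r^s : λ^j_r ≥ 0 for all j}`. -/
def memLR (r s : ℕ) (x : Tup r s) : Prop :=
  memC r s x ∧ ∀ j, 0 ≤ lastEntry (x.1 j)

/-- `C_{SL_r}^s = {x ∈ C_r^s : λ^j_r = 0 for all j}`. -/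
def memCSL (r s : ℕ) (x : Tup r s) : Prop :=
  memC r s x ∧ ∀ j, lastEntry (x.1 j) = 0

/-- `EqLR_r^s = {x ∈ EqC_r^s : λ^j_r ≥ 0 and λ^j_i ≤ ν_i for all i, j}`. -/
def memEqLR (r s : ℕ) (x : Tup r s) : Prop :=
  memEqC r s x ∧ (∀ j, 0 ≤ lastEntry (x.1 j)) ∧ ∀ j i, x.1 j i ≤ x.2 i

/-- `ω_k ∈ ℝ^r`: first `k` entries equal `1`, the rest `0`. -/
def omegaVec (r k : ℕ) : Fin r → ℝ := fun i => if (i : ℕ) < k then 1 else 0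

/-- `x_j ∈ (ℝ^r)^s`: `ω_r` in the `j`-th and last positions, `0` elsewhere. -/
def xvec (r s : ℕ) (j : Fin (s - 1)) : Tup r s :=
  (fun k => if k = j then omegaVec r r else 0, omegaVec r r)

/-- A nonzero `x` in a cone `K` spans an extremal ray of `K` if whenever
`x = y + z` with `y, z ∈ K`, both `y` and `z` are nonnegative multiples of `x`. -/
def IsExtremalRay {M : Type*} [AddCommMonoid M] [Module ℝ M] (K : Set M) (x : M) : Prop :=
  x ≠ 0 ∧ x ∈ K ∧ ∀ y z, y ∈ K → z ∈ K → x = y + z →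
    (∃ c : ℝ, 0 ≤ c ∧ y = c • x) ∧ (∃ c : ℝ, 0 ≤ c ∧ z = c • x)

/-! Adding `∑ a_j • x_j` to a tuple amounts to replacing each `A_j` by `A_j + a_j I` and `C` by
`C + (∑ a_j) I`, which leaves `A₁ + ⋯ + A_{s-1} - C` unchanged, so `EqC_r^s` is invariant under
these translations. Translating by `c ∑ x_j` with `c` large makes every `λ^j` nonnegative, and
since `s - 1 ≥ 2` the last component gains `(s - 1) c ≥ 2c`, enough to dominate every
`λ^j_i + c`. -/

lemma HasEigenvalues.add_scalar {r : ℕ} {A : Matrix (Fin r) (Fin r) ℂ} {μ : Fin r → ℝ}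
    (h : HasEigenvalues A μ) (c : ℝ) :
    HasEigenvalues (A + scalar (Fin r) (c : ℂ)) (fun i => μ i + c) := by
  refine ⟨h.1.add ?_, ?_⟩
  · rw [scalar_apply]
    exact isHermitian_diagonal_of_self_adjoint _ (by simp [IsSelfAdjoint, Pi.star_def])
  · rw [← sub_neg_eq_add, ← map_neg, charpoly_sub_scalar, h.2, prod_comp]
    refine Finset.prod_congr rfl fun i _ => ?_
    simp only [sub_comp, X_comp, C_comp, map_neg, Complex.ofReal_add, map_add]
    ring

lemma omegaVec_self (r : ℕ) : omegaVec r r = 1 :=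
  funext fun i => if_pos i.isLt

section xvec

variable {r s : ℕ}

@[simp]
lemma sum_smul_xvec_fst_apply (a : Fin (s - 1) → ℝ) (k : Fin (s - 1)) (i : Fin r) :
    (∑ j, a j • xvec r s j).1 k i = a k := by
  simp [Prod.fst_sum, Finset.sum_apply, xvec, omegaVec_self, apply_ite (fun v : Fin r → ℝ => v i)]

@[simp]
lemma sum_smul_xvec_snd_apply (a : Fin (s - 1) → ℝ) (i : Fin r) :
    (∑ j, a j • xvec r s j).2 i = ∑ j, a j := by
  simp [Prod.snd_sum, Finset.sum_apply, xvec, omegaVec_self]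

lemma memEqC.add_sum_smul_xvec {x : Tup r s} (hx : memEqC r s x) (a : Fin (s - 1) → ℝ) :
    memEqC r s (x + ∑ j, a j • xvec r s j) := by
  obtain ⟨hA_anti, hB_anti, A, B, hA, hB, hpsd⟩ := hx
  have hfst : ∀ k, (x + ∑ j, a j • xvec r s j).1 k = fun i => x.1 k i + a k := fun k =>
    funext fun i => by simp
  have hsnd : (x + ∑ j, a j • xvec r s j).2 = fun i => x.2 i + ∑ j, a j :=
    funext fun i => by simp
  refine ⟨fun k => hfst k ▸ (hA_anti k).add_const _, hsnd ▸ hB_anti.add_const _,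
    fun k => A k + scalar _ (a k : ℂ), B + scalar _ ((∑ j, a j : ℝ) : ℂ),
    fun k => hfst k ▸ (hA k).add_scalar _, hsnd ▸ hB.add_scalar _, ?_⟩
  convert hpsd using 1
  simp only [Finset.sum_add_distrib, ← map_sum, Complex.ofReal_sum]
  abel

end xvec

lemma lastEntry_nonneg {r : ℕ} {μ : Fin r → ℝ} (h : ∀ i, 0 ≤ μ i) : 0 ≤ lastEntry μ := by
  unfold lastEntry
  split_ifs
  exacts [h _, le_rfl]

theorem stmt2_general (r s : ℕ) (hs : 3 ≤ s) (x : Tup r s) (hx : memEqC r s x) :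
    ∃ (z : Tup r s) (a : Fin (s - 1) → ℝ),
      memEqLR r s z ∧ x = z + ∑ j, a j • xvec r s j := by
  obtain ⟨M, hM⟩ := Finite.exists_le fun p : Fin (s - 1) × Fin r => |x.1 p.1 p.2| + |x.2 p.2|
  set c := max M 0
  have hc : 0 ≤ c := le_max_right _ _
  have hbound : ∀ j i, |x.1 j i| + |x.2 i| ≤ c := fun j i => (hM (j, i)).trans (le_max_left _ _)
  have hs' : (2 : ℝ) ≤ (s - 1 : ℕ) := by exact_mod_cast (by omega : 2 ≤ s - 1)
  refine ⟨x + ∑ j, c • xvec r s j, fun _ => -c,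
    ⟨hx.add_sum_smul_xvec _, fun j => ?_, fun j i => ?_⟩, ?_⟩
  · refine lastEntry_nonneg fun i => ?_
    have hji := hbound j i
    simp only [Prod.fst_add, Pi.add_apply, sum_smul_xvec_fst_apply]
    linarith [neg_abs_le (x.1 j i), abs_nonneg (x.2 i)]
  · have hji := hbound j i
    simp only [Prod.fst_add, Prod.snd_add, Pi.add_apply, sum_smul_xvec_fst_apply,
      sum_smul_xvec_snd_apply, Finset.sum_const, Finset.card_univ, Fintype.card_fin, nsmul_eq_mul]
    nlinarith [le_abs_self (x.1 j i), neg_abs_le (x.2 i)]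
  · simp only [neg_smul, Finset.sum_neg_distrib, add_neg_cancel_right]

/-- every element of `EqC_r^s` is `z + ∑_j a_j • x_j` with
`z ∈ EqLR_r^s` and real `a_j`. -/
theorem stmt2 (r s : ℕ) (hr : 1 ≤ r) (hs : 3 ≤ s) (x : Tup r s) (hx : memEqC r s x) :
    ∃ (z : Tup r s) (a : Fin (s - 1) → ℝ),
      memEqLR r s z ∧ x = z + ∑ j, a j • xvec r s j :=
  stmt2_general r s hs x hx
end
end

section
/- For all integers r ≥ 1 and s ≥ 3, the linear map Φ defined by Φ(λ^1,…,λ^{s-1},ν) = (λ^1 − (|λ^1|/r)·ω_r, …, λ^{s-1} − (|λ^{s-1}|/r)·ω_r, −w_0ν + (|ν|/r)·ω_r) maps C_{SL_r}^s bijectively onto Γ_r(s), and its inverse on Γ_r(s) is given by Ψ(λ^1,…,λ^s) = (λ^1 − λ^1_r·ω_r, …, λ^{s-1} − λ^{s-1}_r·ω_r, −w_0λ^s − (Σ_{j=1}^{s-1} λ^j_r)·ω_r). -/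
open Matrix Polynomial BigOperators
open scoped ComplexOrder

noncomputable section

/-- `|μ| = μ₁ + ⋯ + μ_r`. -/
def totalSum {r : ℕ} (μ : Fin r → ℝ) : ℝ := ∑ i, μ i

/-- `w₀`: the reversal map `w₀(μ₁,…,μ_r) = (μ_r,…,μ₁)`. -/
def w0 {r : ℕ} (μ : Fin r → ℝ) : Fin r → ℝ := fun i => μ i.rev

/-- `Γ_r(s)`: tuples `(λ¹,…,λ^s)` with every `|λ^j| = 0` and
`(λ¹,…,λ^{s-1}, -w₀λ^s) ∈ C_r^s`. -/
def memGamma (r s : ℕ) (x : Tup r s) : Prop :=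
  (∀ j, totalSum (x.1 j) = 0) ∧ totalSum x.2 = 0 ∧
    memC r s (x.1, fun i => -(w0 x.2 i))

/-- `Φ(λ¹,…,λ^{s-1},ν) = (λ¹ - (|λ¹|/r)ω_r, …, λ^{s-1} - (|λ^{s-1}|/r)ω_r,
-w₀ν + (|ν|/r)ω_r)`. -/
def PhiMap (r s : ℕ) (x : Tup r s) : Tup r s :=
  (fun j => x.1 j - (totalSum (x.1 j) / r) • omegaVec r r,
   (fun i => -(w0 x.2 i)) + (totalSum x.2 / r) • omegaVec r r)

/-- `Ψ(λ¹,…,λ^s) = (λ¹ - λ¹_r ω_r, …, λ^{s-1} - λ^{s-1}_r ω_r,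
-w₀λ^s - (∑_j λ^j_r) ω_r)`. -/
def PsiMap (r s : ℕ) (x : Tup r s) : Tup r s :=
  (fun j => x.1 j - lastEntry (x.1 j) • omegaVec r r,
   (fun i => -(w0 x.2 i)) - (∑ j, lastEntry (x.1 j)) • omegaVec r r)

namespace HasEigenvalues

variable {r : ℕ} {A : Matrix (Fin r) (Fin r) ℂ} {μ : Fin r → ℝ}

theorem sub_smul_one (h : HasEigenvalues A μ) (c : ℝ) :
    HasEigenvalues (A - (c : ℂ) • 1) (μ - c • 1) := by
  refine ⟨h.1.sub (isHermitian_one.smul (Complex.conj_ofReal c)), ?_⟩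
  rw [smul_one_eq_diagonal, ← scalar_apply, charpoly_sub_scalar, h.2, prod_comp]
  simp only [sub_comp, X_comp, C_comp, Pi.sub_apply, Pi.smul_apply, Pi.one_apply, smul_eq_mul,
    mul_one, Complex.ofReal_sub, map_sub]
  ring_nf

theorem trace_eq (h : HasEigenvalues A μ) : A.trace = (totalSum μ : ℂ) := by
  rw [trace_eq_neg_charpoly_nextCoeff, h.2, prod_X_sub_C_nextCoeff, neg_neg, totalSum]
  push_cast
  rfl

end HasEigenvalues

section Shift

variable {r s : ℕ}

lemma totalSum_sub_smul_one (μ : Fin r → ℝ) (c : ℝ) :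
    totalSum (μ - c • 1) = totalSum μ - r * c := by
  simp [totalSum, Finset.sum_sub_distrib]

lemma totalSum_add_smul_one (μ : Fin r → ℝ) (c : ℝ) :
    totalSum (μ + c • 1) = totalSum μ + r * c := by
  simp [totalSum, Finset.sum_add_distrib]

lemma totalSum_neg_w0 (μ : Fin r → ℝ) : totalSum (fun i => -w0 μ i) = -totalSum μ := by
  simp only [totalSum, w0, Finset.sum_neg_distrib, neg_inj]
  exact Equiv.sum_comp Fin.revPerm μ

lemma lastEntry_sub_smul_one (hr : 0 < r) (μ : Fin r → ℝ) (c : ℝ) :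
    lastEntry (μ - c • 1) = lastEntry μ - c := by
  simp [lastEntry, hr]

lemma lastEntry_sub_lastEntry_smul_one (μ : Fin r → ℝ) :
    lastEntry (μ - lastEntry μ • 1) = 0 := by
  rcases Nat.eq_zero_or_pos r with rfl | hr
  · simp [lastEntry]
  · rw [lastEntry_sub_smul_one hr, sub_self]

theorem memC.sub_smul_one {x : Tup r s} (hx : memC r s x) (c : Fin (s - 1) → ℝ) :
    memC r s (fun j => x.1 j - c j • 1, x.2 - (∑ j, c j) • 1) := by
  obtain ⟨hmono, hν, A, B, hA, hB, hAB⟩ := hx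
  refine ⟨fun j a b hab => by simpa using hmono j hab, fun a b hab => by simpa using hν hab,
    fun j => A j - (c j : ℂ) • 1, B - ((∑ j, c j : ℝ) : ℂ) • 1,
    fun j => (hA j).sub_smul_one _, hB.sub_smul_one _, ?_⟩
  rw [Finset.sum_sub_distrib, hAB, ← Finset.sum_smul]
  push_cast
  rfl

theorem memC.sum_totalSum {x : Tup r s} (hx : memC r s x) :
    ∑ j, totalSum (x.1 j) = totalSum x.2 := by
  obtain ⟨-, -, A, B, hA, hB, hAB⟩ := hx
  exact_mod_cast (calc
    ∑ j, (totalSum (x.1 j) : ℂ) = ∑ j, (A j).trace := by simp only [fun j => (hA j).trace_eq]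
    _ = B.trace := by rw [← trace_sum, hAB]
    _ = totalSum x.2 := hB.trace_eq)

theorem memGamma_PhiMap (hr : 0 < r) {x : Tup r s} (hx : memC r s x) :
    memGamma r s (PhiMap r s x) := by
  have hr' : (r : ℝ) ≠ 0 := by positivity
  refine ⟨fun j => ?_, ?_, ?_⟩
  · rw [PhiMap, omegaVec_self, totalSum_sub_smul_one]
    field_simp
    ring
  · rw [PhiMap, omegaVec_self, totalSum_add_smul_one, totalSum_neg_w0]
    field_simp
    ring
  · rw [PhiMap, omegaVec_self]
    convert hx.sub_smul_one (fun j => totalSum (x.1 j) / r) using 2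
    rw [← Finset.sum_div, hx.sum_totalSum]
    ext i
    simp only [w0, Pi.add_apply, Fin.rev_rev, Pi.smul_apply, Pi.one_apply, smul_eq_mul, mul_one,
      neg_add_rev, neg_neg, Pi.sub_apply]
    ring

theorem PsiMap_PhiMap (hr : 0 < r) {x : Tup r s} (hx : memCSL r s x) :
    PsiMap r s (PhiMap r s x) = x := by
  obtain ⟨hC, hlast⟩ := hx
  ext j i
  · simp [PsiMap, PhiMap, omegaVec_self, lastEntry_sub_smul_one hr, hlast]
  · simp [PsiMap, PhiMap, omegaVec_self, lastEntry_sub_smul_one hr, hlast, w0, ← Finset.sum_div,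
      hC.sum_totalSum]

theorem memCSL_PsiMap {y : Tup r s} (hy : memGamma r s y) : memCSL r s (PsiMap r s y) := by
  rw [PsiMap, omegaVec_self]
  exact ⟨hy.2.2.sub_smul_one _, fun j => lastEntry_sub_lastEntry_smul_one _⟩

theorem PhiMap_PsiMap (hr : 0 < r) {y : Tup r s} (hy : memGamma r s y) :
    PhiMap r s (PsiMap r s y) = y := by
  have hr' : (r : ℝ) ≠ 0 := by positivity
  obtain ⟨hlam, hnu, -⟩ := hy
  ext j i
  · simp [PsiMap, PhiMap, omegaVec_self, totalSum_sub_smul_one, hlam, neg_div, hr']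
  · simp only [PsiMap, PhiMap, omegaVec_self, totalSum_sub_smul_one, totalSum_neg_w0, hnu]
    simp [w0, neg_div, hr']

end Shift

theorem stmt3_general (r s : ℕ) (hr : 1 ≤ r) :
    (∀ x : Tup r s, memCSL r s x → memGamma r s (PhiMap r s x)) ∧
    (∀ x : Tup r s, memCSL r s x → PsiMap r s (PhiMap r s x) = x) ∧
    (∀ y : Tup r s, memGamma r s y →
      memCSL r s (PsiMap r s y) ∧ PhiMap r s (PsiMap r s y) = y) :=
  ⟨fun _ hx => memGamma_PhiMap hr hx.1, fun _ => PsiMap_PhiMap hr,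
    fun _ hy => ⟨memCSL_PsiMap hy, PhiMap_PsiMap hr hy⟩⟩

/-- `Φ` maps `C_{SL_r}^s` bijectively onto `Γ_r(s)`, with inverse `Ψ`. -/
theorem stmt3 (r s : ℕ) (hr : 1 ≤ r) (hs : 3 ≤ s) :
    (∀ x : Tup r s, memCSL r s x → memGamma r s (PhiMap r s x)) ∧
    (∀ x : Tup r s, memCSL r s x → PsiMap r s (PhiMap r s x) = x) ∧
    (∀ y : Tup r s, memGamma r s y →
      memCSL r s (PsiMap r s y) ∧ PhiMap r s (PsiMap r s y) = y) :=
  stmt3_general r s hr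
end
end

section
/- Let r ≥ 1, s ≥ 3, and let 0 ≤ k_1,…,k_{s-1}, ℓ ≤ r be integers, not all zero. If x = (ω_{k_1}, ω_{k_2}, …, ω_{k_{s-1}}, ω_ℓ) belongs to EqLR_r^s, then x spans an extremal ray of EqLR_r^s: whenever x = y + z with y, z ∈ EqLR_r^s, both y and z are nonnegative scalar multiples of x. -/
open Matrix Polynomial BigOperators
open scoped ComplexOrder

noncomputable section

lemma antitone_nonneg' {r : ℕ} (hr : 1 ≤ r) {μ : Fin r → ℝ} (hμ : Antitone μ)
    (h0 : 0 ≤ lastEntry μ) (i : Fin r) : 0 ≤ μ i := by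
  rw [lastEntry, dif_pos (by omega : 0 < r)] at h0
  exact le_trans h0 (hμ (by rw [Fin.le_def]; simp only [Fin.val_mk]; omega))

lemma const_init' {r : ℕ} (hr : 0 < r) {f g : Fin r → ℝ} (hf : Antitone f) (hg : Antitone g)
    {m : ℕ} (hsum : ∀ i : Fin r, (i : ℕ) < m → f i + g i = 1)
    (i : Fin r) (hi : (i : ℕ) < m) : f i = f ⟨0, hr⟩ := by
  have h0 : (⟨0, hr⟩ : Fin r) ≤ i := Fin.le_def.mpr (Nat.zero_le _)
  have h1 := hf h0
  have h2 := hg h0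
  have h3 := hsum i hi
  have h4 := hsum ⟨0, hr⟩ (by omega)
  linarith

/-- if `x = (ω_{k₁},…,ω_{k_{s-1}},ω_ℓ)` (not all zero) belongs to
`EqLR_r^s`, then `x` spans an extremal ray of `EqLR_r^s`. -/
theorem stmt4 (r s : ℕ) (hr : 1 ≤ r) (hs : 3 ≤ s) (k : Fin (s - 1) → ℕ) (ℓ : ℕ)
    (hk : ∀ j, k j ≤ r) (hl : ℓ ≤ r)
    (hnz : ¬ ((∀ j, k j = 0) ∧ ℓ = 0))
    (hmem : memEqLR r s (fun j => omegaVec r (k j), omegaVec r ℓ)) :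
    IsExtremalRay {y : Tup r s | memEqLR r s y}
      (fun j => omegaVec r (k j), omegaVec r ℓ) := by
  have hr0 : 0 < r := hr
  have hs1 : 0 < s - 1 := by omega
  set i0 : Fin r := ⟨0, hr0⟩ with hi0def
  set j0 : Fin (s - 1) := ⟨0, hs1⟩ with hj0def
  -- ℓ ≥ 1
  have hl1 : 0 < ℓ := by
    by_contra h
    have hl0 : ℓ = 0 := by omega
    apply hnz
    refine ⟨fun j => ?_, hl0⟩
    by_contra hkj
    have h2 := hmem.2.2 j i0
    simp only [omegaVec, hl0] at h2
    rw [if_pos (show (i0 : ℕ) < k j by simpa [hi0def] using Nat.pos_of_ne_zero hkj),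
      if_neg (by omega)] at h2
    linarith
  constructor
  · -- x ≠ 0
    intro h
    have h2 : omegaVec r ℓ i0 = 0 := congrFun (congrArg Prod.snd h) i0
    rw [omegaVec, if_pos (show (i0 : ℕ) < ℓ by simpa [hi0def] using hl1)] at h2
    norm_num at h2
  refine ⟨hmem, ?_⟩
  intro y z hy hz hsum
  obtain ⟨⟨hyA, hyν, -⟩, hy0, hyle⟩ := hy
  obtain ⟨⟨hzA, hzν, -⟩, hz0, hzle⟩ := hz
  -- pointwise sum equations
  have hs1' : ∀ j i, y.1 j i + z.1 j i = omegaVec r (k j) i := by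
    intro j i
    exact (congrFun (congrFun (congrArg Prod.fst hsum) j) i).symm
  have hs2' : ∀ i, y.2 i + z.2 i = omegaVec r ℓ i := by
    intro i
    exact (congrFun (congrArg Prod.snd hsum) i).symm
  -- nonnegativity
  have hyn : ∀ j i, 0 ≤ y.1 j i := fun j i => antitone_nonneg' hr (hyA j) (hy0 j) i
  have hzn : ∀ j i, 0 ≤ z.1 j i := fun j i => antitone_nonneg' hr (hzA j) (hz0 j) i
  have hyνn : ∀ i, 0 ≤ y.2 i := fun i => le_trans (hyn j0 i) (hyle j0 i)
  have hzνn : ∀ i, 0 ≤ z.2 i := fun i => le_trans (hzn j0 i) (hzle j0 i)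
  set b : ℝ := y.2 i0 with hbdef
  have hb0 : 0 ≤ b := hyνn i0
  -- ν_y + ν_z values
  have hν1 : ∀ i : Fin r, (i : ℕ) < ℓ → y.2 i + z.2 i = 1 := by
    intro i hi
    rw [hs2' i, omegaVec, if_pos hi]
  have hν0 : ∀ i : Fin r, ℓ ≤ (i : ℕ) → y.2 i = 0 := by
    intro i hi
    have h := hs2' i
    rw [omegaVec, if_neg (by omega)] at h
    linarith [hyνn i, hzνn i]
  have hνconst : ∀ i : Fin r, (i : ℕ) < ℓ → y.2 i = b :=
    fun i hi => const_init' hr0 hyν hzν hν1 i hi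
  have hbν : y.2 = fun i => b * omegaVec r ℓ i := by
    funext i
    by_cases hi : (i : ℕ) < ℓ
    · rw [omegaVec, if_pos hi, mul_one, hνconst i hi]
    · rw [omegaVec, if_neg hi, mul_zero, hν0 i (by omega)]
  -- z's nu value at 0
  have hzb : z.2 i0 = 1 - b := by
    have := hν1 i0 (by simpa [hi0def] using hl1)
    linarith
  have hb1 : b ≤ 1 := by linarith [hzνn i0]
  -- component sequences
  have hμ1 : ∀ j (i : Fin r), (i : ℕ) < k j → y.1 j i + z.1 j i = 1 := by
    intro j i hi
    rw [hs1' j i, omegaVec, if_pos hi]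
  have hμ0 : ∀ j (i : Fin r), k j ≤ (i : ℕ) → y.1 j i = 0 := by
    intro j i hi
    have h := hs1' j i
    rw [omegaVec, if_neg (by omega)] at h
    linarith [hyn j i, hzn j i]
  have haj : ∀ j (i : Fin r), (i : ℕ) < k j → y.1 j i = b := by
    intro j i hi
    have hc := const_init' hr0 (hyA j) (hzA j) (hμ1 j) i hi
    have hk0 : (0 : ℕ) < k j := by omega
    -- value at 0 equals b
    have h1 : y.1 j i0 ≤ b := hyle j i0
    have h2 : z.1 j i0 ≤ z.2 i0 := hzle j i0
    have h3 : y.1 j i0 + z.1 j i0 = 1 := hμ1 j i0 (by simpa [hi0def] using hk0)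
    rw [hzb] at h2
    have : y.1 j i0 = b := by linarith
    rw [hi0def] at this
    rw [hc, this]
  have hbμ : ∀ j, y.1 j = fun i => b * omegaVec r (k j) i := by
    intro j
    funext i
    by_cases hi : (i : ℕ) < k j
    · rw [omegaVec, if_pos hi, mul_one, haj j i hi]
    · rw [omegaVec, if_neg hi, mul_zero, hμ0 j i (by omega)]
  constructor
  · refine ⟨b, hb0, ?_⟩
    apply Prod.ext
    · funext j i
      show y.1 j i = b * omegaVec r (k j) i
      rw [hbμ j]
    · funext i
      show y.2 i = b * omegaVec r ℓ i
      rw [hbν]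
  · refine ⟨1 - b, by linarith, ?_⟩
    apply Prod.ext
    · funext j i
      show z.1 j i = (1 - b) * omegaVec r (k j) i
      have h := hs1' j i
      rw [hbμ j] at h
      by_cases hi : (i : ℕ) < k j
      · simp only [omegaVec, if_pos hi] at h ⊢
        linarith
      · simp only [omegaVec, if_neg hi] at h ⊢
        linarith
    · funext i
      show z.2 i = (1 - b) * omegaVec r ℓ i
      have h := hs2' i
      rw [hbν] at h
      by_cases hi : (i : ℕ) < ℓ
      · simp only [omegaVec, if_pos hi] at h ⊢
        linarith
      · simp only [omegaVec, if_neg hi] at h ⊢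
        linarith
end
end

section
/- Let r ≥ 1, s ≥ 3, and let 0 ≤ k_1,…,k_{s-1}, ℓ ≤ r be integers. Then (ω_{k_1}, ω_{k_2}, …, ω_{k_{s-1}}, ω_ℓ) belongs to EqLR_r^s if and only if k_i ≤ ℓ for every i ∈ {1,…,s-1} and Σ_{i=1}^{s-1} k_i ≥ ℓ. -/
open Matrix Polynomial BigOperators
open scoped ComplexOrder

noncomputable section

/-! Necessity: comparing the `ℓ`-th entries in `ω_{k_j} ≤ ω_ℓ` gives `k_j ≤ ℓ`, and the trace of
the positive semidefinite matrix `∑ A_j - C` gives `∑ k_j ≥ ℓ`, since the trace of a Hermitian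
matrix is the sum of its eigenvalues.

Sufficiency: laying the intervals `[a_j, a_j + k_j)` of lengths `k_j` end to end covers
`[0, ∑ k_j) ⊇ [0, ℓ)`. The diagonal projections onto these intervals, read cyclically in `Fin r`,
are permuted copies of `diag ω_{k_j}`, and their sum dominates `C = diag ω_ℓ` entrywise. -/

theorem HasEigenvalues.trace_eq_s5 {r : ℕ} {A : Matrix (Fin r) (Fin r) ℂ} {μ : Fin r → ℝ}
    (h : HasEigenvalues A μ) : A.trace = ∑ i, (μ i : ℂ) := by
  have hprod : ∏ i, (X - C (μ i : ℂ)) =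
      ((Finset.univ.val.map fun i => (μ i : ℂ)).map fun a => X - C a).prod := by
    rw [Multiset.map_map]; rfl
  rw [trace_eq_sum_roots_charpoly, h.2, hprod, roots_multiset_prod_X_sub_C]
  rfl

theorem hasEigenvalues_diagonal_comp_perm {r : ℕ} (μ : Fin r → ℝ) (σ : Equiv.Perm (Fin r)) :
    HasEigenvalues (diagonal fun i => (μ (σ i) : ℂ)) μ :=
  ⟨isHermitian_diagonal_of_self_adjoint _ (funext fun _ => Complex.conj_ofReal _), by
    rw [charpoly_diagonal]; exact Equiv.prod_comp σ fun i => X - C (μ i : ℂ)⟩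

theorem memEqC.sum_snd_le_sum_fst {r s : ℕ} {x : Tup r s} (hx : memEqC r s x) :
    ∑ i, x.2 i ≤ ∑ j, ∑ i, x.1 j i := by
  obtain ⟨-, -, A, B, hA, hB, hAB⟩ := hx
  have htr := hAB.trace_nonneg
  rw [trace_sub, trace_sum, sub_nonneg, hB.trace_eq_s5,
    Finset.sum_congr rfl fun j _ => (hA j).trace_eq_s5] at htr
  exact_mod_cast htr

theorem omegaVec_nonneg (r k : ℕ) : 0 ≤ omegaVec r k := fun i => by
  unfold omegaVec; split_ifs <;> norm_num

theorem antitone_omegaVec (r k : ℕ) : Antitone (omegaVec r k) := fun i j hij => by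
  have := Fin.le_def.1 hij
  unfold omegaVec
  split_ifs <;> first | omega | norm_num

theorem monotone_omegaVec (r : ℕ) : Monotone (omegaVec r) := fun k l hkl i => by
  unfold omegaVec
  split_ifs <;> first | omega | norm_num

theorem omegaVec_le_omegaVec_iff {r k l : ℕ} (hk : k ≤ r) :
    omegaVec r k ≤ omegaVec r l ↔ k ≤ l := by
  refine ⟨fun h => ?_, fun h => monotone_omegaVec r h⟩
  by_contra! hlk
  have := h ⟨l, by omega⟩
  norm_num [omegaVec, hlk] at this

theorem sum_omegaVec {r k : ℕ} (hk : k ≤ r) : ∑ i, omegaVec r k i = k := by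
  simp [omegaVec, Finset.sum_boole, Fin.card_filter_val_lt, hk]

theorem lastEntry_omegaVec_nonneg (r k : ℕ) : 0 ≤ lastEntry (omegaVec r k) := by
  unfold lastEntry; split_ifs
  · exact omegaVec_nonneg r k _
  · rfl

theorem exists_offsets_cover {m : ℕ} (k : Fin m → ℕ) :
    ∃ a : Fin m → ℕ, ∀ i < ∑ j, k j, ∃ j, a j ≤ i ∧ i < a j + k j := by
  refine ⟨fun j => ∑ t : Fin j, k (Fin.castLE j.2.le t), fun i hi => ?_⟩
  obtain ⟨⟨j, t⟩, hjt⟩ := finSigmaFinEquiv.surjective (⟨i, hi⟩ : Fin (∑ j, k j))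
  have hi' : ∑ t' : Fin j, k (Fin.castLE j.2.le t') + t = i := by
    simpa [finSigmaFinEquiv_apply] using congrArg Fin.val hjt
  exact ⟨j, by dsimp only; omega, by dsimp only; omega⟩

theorem Fin.val_sub_ofNat_lt {r : ℕ} [NeZero r] {i : Fin r} {a k : ℕ} (hai : a ≤ i.val)
    (hik : i.val < a + k) : (i - Fin.ofNat r a).val < k := by
  have ha : (Fin.ofNat r a).val = a := by rw [Fin.val_ofNat, Nat.mod_eq_of_lt (by omega)]
  rw [Fin.sub_val_of_le (Fin.le_def.2 (by omega)), ha]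
  omega

theorem omegaVec_le_sum_omegaVec_sub {r m ℓ : ℕ} [NeZero r] (k a : Fin m → ℕ)
    (hcover : ∀ i < ℓ, ∃ j, a j ≤ i ∧ i < a j + k j) (i : Fin r) :
    omegaVec r ℓ i ≤ ∑ j, omegaVec r (k j) (i - Fin.ofNat r (a j)) := by
  by_cases hi : i.val < ℓ
  · obtain ⟨j, hai, hik⟩ := hcover i hi
    calc omegaVec r ℓ i = omegaVec r (k j) (i - Fin.ofNat r (a j)) := by
          simp only [omegaVec, if_pos hi, if_pos (Fin.val_sub_ofNat_lt hai hik)]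
      _ ≤ _ := Finset.single_le_sum (f := fun j => omegaVec r (k j) (i - Fin.ofNat r (a j)))
          (fun j _ => omegaVec_nonneg r (k j) _) (Finset.mem_univ j)
  · calc omegaVec r ℓ i = 0 := if_neg hi
      _ ≤ _ := Finset.sum_nonneg fun j _ => omegaVec_nonneg r (k j) _

theorem posSemidef_sum_diagonal_sub_diagonal {ι n : Type*} [Fintype ι] [DecidableEq n]
    {d : ι → n → ℝ} {e : n → ℝ} (h : ∀ i, e i ≤ ∑ j, d j i) :
    (∑ j, diagonal (fun i => (d j i : ℂ)) - diagonal fun i => (e i : ℂ)).PosSemidef := by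
  have hsum : ∑ j, diagonal (fun i => (d j i : ℂ)) = diagonal fun i => ∑ j, (d j i : ℂ) := by
    rw [← Finset.sum_fn]
    exact (map_sum (diagonalAddMonoidHom n ℂ) _ _).symm
  rw [hsum, diagonal_sub]
  refine PosSemidef.diagonal fun i => ?_
  simpa [Complex.zero_le_real, ← Complex.ofReal_sum] using h i

theorem memEqLR_omegaVec_of_le {r s ℓ : ℕ} [NeZero r] (k : Fin (s - 1) → ℕ)
    (hkl : ∀ j, k j ≤ ℓ) (hsum : ℓ ≤ ∑ j, k j) :
    memEqLR r s (fun j => omegaVec r (k j), omegaVec r ℓ) := by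
  obtain ⟨a, ha⟩ := exists_offsets_cover k
  let σ : Fin (s - 1) → Equiv.Perm (Fin r) := fun j => Equiv.subRight (Fin.ofNat r (a j))
  refine ⟨⟨fun j => antitone_omegaVec r (k j), antitone_omegaVec r ℓ,
    fun j => diagonal fun i => (omegaVec r (k j) (σ j i) : ℂ),
    diagonal fun i => (omegaVec r ℓ i : ℂ),
    fun j => hasEigenvalues_diagonal_comp_perm _ (σ j),
    hasEigenvalues_diagonal_comp_perm _ (Equiv.refl _),
    posSemidef_sum_diagonal_sub_diagonal
      (omegaVec_le_sum_omegaVec_sub k a fun i hi => ha i (by omega))⟩,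
    fun j => lastEntry_omegaVec_nonneg r (k j), fun j => monotone_omegaVec r (hkl j)⟩

theorem stmt5_general (r s : ℕ) (hr : 1 ≤ r) (k : Fin (s - 1) → ℕ) (ℓ : ℕ)
    (hk : ∀ j, k j ≤ r) (hl : ℓ ≤ r) :
    memEqLR r s (fun j => omegaVec r (k j), omegaVec r ℓ) ↔
      ((∀ j, k j ≤ ℓ) ∧ ℓ ≤ ∑ j, k j) := by
  constructor
  · rintro ⟨hC, -, hmaj⟩
    refine ⟨fun j => (omegaVec_le_omegaVec_iff (hk j)).1 (hmaj j), ?_⟩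
    have htrace := hC.sum_snd_le_sum_fst
    simp only [sum_omegaVec hl, sum_omegaVec (hk _)] at htrace
    exact_mod_cast htrace
  · rintro ⟨hkl, hsum⟩
    have : NeZero r := ⟨by omega⟩
    exact memEqLR_omegaVec_of_le k hkl hsum

/-- `(ω_{k₁},…,ω_{k_{s-1}},ω_ℓ) ∈ EqLR_r^s` iff each `k_i ≤ ℓ` and
`∑ k_i ≥ ℓ`. -/
theorem stmt5 (r s : ℕ) (hr : 1 ≤ r) (hs : 3 ≤ s) (k : Fin (s - 1) → ℕ) (ℓ : ℕ)
    (hk : ∀ j, k j ≤ r) (hl : ℓ ≤ r) :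
    memEqLR r s (fun j => omegaVec r (k j), omegaVec r ℓ) ↔
      ((∀ j, k j ≤ ℓ) ∧ ℓ ≤ ∑ j, k j) :=
  stmt5_general r s hr k ℓ hk hl
end
end

section
/- Let r ≥ 1 and s ≥ 3. For every integer ℓ with 1 ≤ ℓ ≤ r, the tuple (ω_ℓ, ω_ℓ, …, ω_ℓ, ω_ℓ) (with ω_ℓ in all s positions) belongs to EqLR_r^s and spans an extremal ray of EqLR_r^s. -/
open Matrix Polynomial BigOperators
open scoped ComplexOrder

noncomputable section

lemma charpoly_diag_aux {n : Type*} [Fintype n] [DecidableEq n] (d : n → ℂ) :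
    (Matrix.diagonal d).charpoly = ∏ i, (X - Polynomial.C (d i)) := by
  rw [Matrix.charpoly]
  have : charmatrix (Matrix.diagonal d)
      = Matrix.diagonal (fun i => (X : ℂ[X]) - Polynomial.C (d i)) := by
    ext i j
    by_cases h : i = j
    · subst h; simp [charmatrix_apply_eq]
    · simp [charmatrix_apply_ne _ _ _ h, Matrix.diagonal_apply_ne _ h]
  rw [this, Matrix.det_diagonal]

lemma omega_antitone (r ℓ : ℕ) : Antitone (omegaVec r ℓ) := by
  intro i j hij
  unfold omegaVec
  by_cases h : (j : ℕ) < ℓ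
  · have : (i : ℕ) < ℓ := lt_of_le_of_lt hij h
    simp [h, this]
  · simp only [h, if_false]
    by_cases h' : (i : ℕ) < ℓ <;> simp [h']

lemma hasEig_diag (r ℓ : ℕ) :
    HasEigenvalues (Matrix.diagonal fun i : Fin r => ((omegaVec r ℓ i : ℝ) : ℂ))
      (omegaVec r ℓ) := by
  constructor
  · exact Matrix.isHermitian_diagonal_of_self_adjoint _ (funext fun i => by
      simp [Pi.star_apply, RCLike.star_def, Complex.conj_ofReal])
  · rw [charpoly_diag_aux]

lemma lastEntry_eq {r : ℕ} (hr : 0 < r) (μ : Fin r → ℝ) :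
    lastEntry μ = μ ⟨r - 1, by omega⟩ := by
  unfold lastEntry
  rw [dif_pos hr]

/-- Half of extremality: one summand is a nonnegative multiple. -/
lemma ext_half (r s : ℕ) (hr : 1 ≤ r) (hs : 3 ≤ s) (ℓ : ℕ) (h1 : 1 ≤ ℓ) (h2 : ℓ ≤ r)
    (y z : Tup r s) (hy : memEqLR r s y) (hz : memEqLR r s z)
    (hsum : (fun _ => omegaVec r ℓ, omegaVec r ℓ) = y + z) :
    ∃ c : ℝ, 0 ≤ c ∧ y = c • (fun _ => omegaVec r ℓ, omegaVec r ℓ) := by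
  obtain ⟨⟨hyA, hyN, -⟩, hyL, hyle⟩ := hy
  obtain ⟨⟨hzA, hzN, -⟩, hzL, hzle⟩ := hz
  have hs1 : ∀ j i, omegaVec r ℓ i = y.1 j i + z.1 j i := by
    intro j i
    have := congrArg Prod.fst hsum
    exact congrFun (congrFun this j) i
  have hs2 : ∀ i, omegaVec r ℓ i = y.2 i + z.2 i := by
    intro i
    exact congrFun (congrArg Prod.snd hsum) i
  have j0 : Fin (s - 1) := ⟨0, by omega⟩
  -- nonnegativity of all entries
  have hy1nn : ∀ j i, 0 ≤ y.1 j i := by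
    intro j i
    have hle : i ≤ (⟨r - 1, by omega⟩ : Fin r) := by
      have := i.isLt; rw [Fin.le_def]; simp only []; omega
    calc (0:ℝ) ≤ lastEntry (y.1 j) := hyL j
      _ = y.1 j ⟨r - 1, by omega⟩ := lastEntry_eq (by omega) _
      _ ≤ y.1 j i := hyA j hle
  have hz1nn : ∀ j i, 0 ≤ z.1 j i := by
    intro j i
    have hle : i ≤ (⟨r - 1, by omega⟩ : Fin r) := by
      have := i.isLt; rw [Fin.le_def]; simp only []; omega
    calc (0:ℝ) ≤ lastEntry (z.1 j) := hzL j
      _ = z.1 j ⟨r - 1, by omega⟩ := lastEntry_eq (by omega) _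
      _ ≤ z.1 j i := hzA j hle
  have hy2nn : ∀ i, 0 ≤ y.2 i := fun i => le_trans (hy1nn j0 i) (hyle j0 i)
  have hz2nn : ∀ i, 0 ≤ z.2 i := fun i => le_trans (hz1nn j0 i) (hzle j0 i)
  -- entries with index ≥ ℓ vanish
  have hy2z : ∀ i : Fin r, ¬ ((i : ℕ) < ℓ) → y.2 i = 0 := by
    intro i h
    have h0 : omegaVec r ℓ i = 0 := by simp [omegaVec, h]
    have := hs2 i
    have := hy2nn i; have := hz2nn i
    linarith [hs2 i, h0 ▸ (hs2 i)]
  have hy1z : ∀ j (i : Fin r), ¬ ((i : ℕ) < ℓ) → y.1 j i = 0 := by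
    intro j i h
    have := hyle j i
    have := hy1nn j i
    have := hy2z i h
    linarith
  -- for indices < ℓ : y.1 j i = y.2 i
  have hkey : ∀ j (i : Fin r), (i : ℕ) < ℓ → y.1 j i = y.2 i := by
    intro j i h
    have h0 : omegaVec r ℓ i = 1 := by simp [omegaVec, h]
    have e1 := hs1 j i
    have e2 := hs2 i
    have l1 := hyle j i
    have l2 := hzle j i
    rw [h0] at e1 e2
    linarith
  -- y.2 is constant on indices < ℓ
  have hconst : ∀ i i' : Fin r, i ≤ i' → (i' : ℕ) < ℓ → y.2 i = y.2 i' := by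
    intro i i' hle hlt
    refine le_antisymm ?_ (hyN hle)
    have hlt' : (i : ℕ) < ℓ := lt_of_le_of_lt hle hlt
    have h0 : omegaVec r ℓ i = 1 := by simp [omegaVec, hlt']
    have h0' : omegaVec r ℓ i' = 1 := by simp [omegaVec, hlt]
    have e1 := hs2 i
    have e2 := hs2 i'
    have := hzN hle
    rw [h0] at e1; rw [h0'] at e2
    linarith
  set i0 : Fin r := ⟨0, by omega⟩ with hi0
  refine ⟨y.2 i0, hy2nn i0, ?_⟩
  have hval : ∀ i : Fin r, y.2 i = y.2 i0 * omegaVec r ℓ i := by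
    intro i
    by_cases h : (i : ℕ) < ℓ
    · have : y.2 i0 = y.2 i := hconst i0 i (Fin.mk_le_of_le_val (by omega)) h
      simp [omegaVec, h, ← this]
    · simp [omegaVec, h, hy2z i h]
  have h2eq : y.2 = y.2 i0 • omegaVec r ℓ := by
    funext i
    simpa [Pi.smul_apply, smul_eq_mul] using hval i
  refine Prod.ext ?_ h2eq
  funext j i
  by_cases h : (i : ℕ) < ℓ
  · simp only [Prod.smul_fst, Pi.smul_apply, smul_eq_mul]
    rw [hkey j i h, hval i]
  · simp only [Prod.smul_fst, Pi.smul_apply, smul_eq_mul]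
    rw [hy1z j i h]
    simp [omegaVec, h]

/-- for `1 ≤ ℓ ≤ r`, the tuple `(ω_ℓ,…,ω_ℓ,ω_ℓ)` belongs to
`EqLR_r^s` and spans an extremal ray of it. -/
theorem stmt7 (r s : ℕ) (hr : 1 ≤ r) (hs : 3 ≤ s) (ℓ : ℕ) (h1 : 1 ≤ ℓ) (h2 : ℓ ≤ r) :
    memEqLR r s (fun _ => omegaVec r ℓ, omegaVec r ℓ) ∧
    IsExtremalRay {y : Tup r s | memEqLR r s y}
      (fun _ => omegaVec r ℓ, omegaVec r ℓ) := by
  have hmem : memEqLR r s (fun _ => omegaVec r ℓ, omegaVec r ℓ) := by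
    refine ⟨⟨fun j => omega_antitone r ℓ, omega_antitone r ℓ, ?_⟩, ?_, ?_⟩
    · refine ⟨fun _ => Matrix.diagonal fun i : Fin r => ((omegaVec r ℓ i : ℝ) : ℂ),
        Matrix.diagonal fun i : Fin r => ((omegaVec r ℓ i : ℝ) : ℂ),
        fun j => hasEig_diag r ℓ, hasEig_diag r ℓ, ?_⟩
      rw [Finset.sum_const, Finset.card_univ, Fintype.card_fin]
      have heq : ((s-1) • Matrix.diagonal fun i : Fin r => ((omegaVec r ℓ i : ℝ) : ℂ)) -
          (Matrix.diagonal fun i : Fin r => ((omegaVec r ℓ i : ℝ) : ℂ)) =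
          Matrix.diagonal fun i : Fin r => ((s-2 : ℕ) : ℂ) * ((omegaVec r ℓ i : ℝ) : ℂ) := by
        ext i j
        by_cases h : i = j
        · subst h
          simp only [Matrix.sub_apply, Matrix.smul_apply, Matrix.diagonal_apply_eq]
          have hcast : ((s-1 : ℕ) : ℂ) = ((s-2:ℕ) : ℂ) + 1 := by
            have hs' : s - 1 = (s-2) + 1 := by omega
            rw [hs']; push_cast; ring
          rw [nsmul_eq_mul, hcast]; ring
        · simp only [Matrix.sub_apply, Matrix.smul_apply, Matrix.diagonal_apply_ne _ h,
            smul_zero, sub_zero]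
      rw [heq]
      refine Matrix.posSemidef_diagonal_iff.mpr fun i => ?_
      by_cases h : (i:ℕ) < ℓ
      · simp only [omegaVec, h, if_true, Complex.ofReal_one, mul_one]
        exact_mod_cast Nat.cast_nonneg' _
      · simp [omegaVec, h]
    · intro j
      rw [lastEntry_eq (by omega)]
      unfold omegaVec
      by_cases h : r - 1 < ℓ <;> simp [h]
    · intro j i; exact le_refl _
  refine ⟨hmem, ?_, hmem, ?_⟩
  · intro hcon
    have := congrFun (congrArg Prod.snd hcon) ⟨0, by omega⟩
    simp [omegaVec, h1] at this
    omega
  · intro y z hy hz hsum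
    exact ⟨ext_half r s hr hs ℓ h1 h2 y z hy hz hsum,
      ext_half r s hr hs ℓ h1 h2 z y hz hy (by rw [hsum, add_comm])⟩
end
end

section
/- Let r ≥ 1 and s ≥ 3, and let ℓ be an integer with 1 ≤ ℓ ≤ r. Set x_ℓ = (ω_ℓ, …, ω_ℓ, ω_ℓ) ∈ (ℝ^r)^s. Then there exists a Horn datum (d; I_1,…,I_{s-1},K) whose Horn inequality holds with equality at x_ℓ, i.e., Σ_{j=1}^{s-1} Σ_{a∈I_j} (ω_ℓ)_a = Σ_{k∈K} (ω_ℓ)_k, if and only if (s−1)·ℓ < r. -/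
open Matrix Polynomial BigOperators
open scoped ComplexOrder

noncomputable section

/-- `τ(I)`: the nonincreasing partition associated to a `d`-element subset `I` of
`{1, …, r}` (here `Fin r`, 0-based): `τ(I)_m = i_{d+1-m} - (d+1-m)`. -/
def tauSeq {r d : ℕ} (I : Finset (Fin r)) (h : I.card = d) : Fin d → ℝ :=
  fun m => (((I.orderIsoOfFin h m.rev : Fin r) : ℕ) : ℝ) - ((m.rev : ℕ) : ℝ)

/-- A Horn datum `(d; I₁, …, I_{s-1}, K)`: `d`-element subsets of `{1, …, r}` with
`1 ≤ d < r` such that `(τ(I₁), …, τ(I_{s-1}), τ(K)) ∈ C_d^s` (equivalently, the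
Littlewood–Richardson coefficient `c_{τ(I₁),…,τ(I_{s-1})}^{τ(K)}` is nonzero). -/
structure HornDatum (r s : ℕ) where
  d : ℕ
  one_le_d : 1 ≤ d
  d_lt_r : d < r
  I : Fin (s - 1) → Finset (Fin r)
  K : Finset (Fin r)
  cardI : ∀ j, (I j).card = d
  cardK : K.card = d
  mem : memC d s (fun j => tauSeq (I j) (cardI j), tauSeq K cardK)

/- ### Auxiliary lemmas -/

lemma my_fin_le_strictMono {n : ℕ} {f : Fin n → ℕ} (hf : StrictMono f) (k : Fin n) :
    (k : ℕ) ≤ f k := by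
  obtain ⟨m, hm⟩ := k
  induction m with
  | zero => exact Nat.zero_le _
  | succ i ih =>
    have h1 : f ⟨i, by omega⟩ < f ⟨i+1, hm⟩ := hf (by simp [Fin.lt_def])
    have h2 := ih (by omega)
    simp only [] at h1 h2 ⊢
    omega

lemma my_image_orderEmbOfFin {α : Type*} [LinearOrder α] (S : Finset α) {d : ℕ}
    (h : S.card = d) : Finset.image (S.orderEmbOfFin h) Finset.univ = S := by
  apply Finset.eq_of_subset_of_card_le
  · intro x hx
    simp only [Finset.mem_image] at hx
    obtain ⟨i, _, rfl⟩ := hx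
    exact S.orderEmbOfFin_mem h i
  · rw [Finset.card_image_of_injective _ (S.orderEmbOfFin h).injective, Finset.card_univ,
      Fintype.card_fin, h]

lemma my_sum_orderEmbOfFin {α M : Type*} [LinearOrder α] [AddCommMonoid M]
    (S : Finset α) {d : ℕ} (h : S.card = d) (f : α → M) :
    ∑ m : Fin d, f (S.orderEmbOfFin h m) = ∑ x ∈ S, f x := by
  conv_rhs => rw [← my_image_orderEmbOfFin S h]
  exact (Finset.sum_image (fun x _ y _ hxy => (S.orderEmbOfFin h).injective hxy)).symm

lemma my_gauss (n : ℕ) : 2 * (∑ m ∈ Finset.range n, m) + n = n * n := by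
  induction n with
  | zero => simp
  | succ k ih => rw [Finset.sum_range_succ]; ring_nf; ring_nf at ih; omega

lemma my_sum_sq_le (S : Finset ℕ) : S.card * S.card ≤ 2 * (∑ x ∈ S, x) + S.card := by
  classical
  have key : ∑ m : Fin S.card, (m : ℕ) ≤ ∑ x ∈ S, x := by
    rw [← my_sum_orderEmbOfFin S rfl (fun x => x)]
    exact Finset.sum_le_sum fun m _ =>
      my_fin_le_strictMono (S.orderEmbOfFin rfl).strictMono m
  have h0 : ∑ m : Fin S.card, (m : ℕ) = ∑ m ∈ Finset.range S.card, m :=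
    Fin.sum_univ_eq_sum_range (fun i => i) _
  have := my_gauss S.card
  omega

lemma my_sum_lb (S : Finset ℕ) (ℓ : ℕ) (h : ∀ x ∈ S, ℓ ≤ x) :
    2 * ℓ * S.card + S.card * S.card ≤ 2 * (∑ x ∈ S, x) + S.card := by
  classical
  have hinj : Set.InjOn (fun x => x - ℓ) S := by
    intro x hx y hy hxy
    have := h x hx; have := h y hy; simp only [] at hxy; omega
  have hcard : (S.image (fun x => x - ℓ)).card = S.card := Finset.card_image_of_injOn hinj
  have hsum : ∑ y ∈ S.image (fun x => x - ℓ), y = ∑ x ∈ S, (x - ℓ) :=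
    Finset.sum_image (fun x hx y hy hxy => hinj hx hy hxy)
  have hbase := my_sum_sq_le (S.image (fun x => x - ℓ))
  rw [hcard, hsum] at hbase
  have hsplit : ∑ x ∈ S, x = (∑ x ∈ S, (x - ℓ)) + S.card * ℓ := by
    have h1 : ∑ x ∈ S, x = ∑ x ∈ S, ((x - ℓ) + ℓ) :=
      Finset.sum_congr rfl (fun x hx => by have := h x hx; omega)
    rw [h1, Finset.sum_add_distrib, Finset.sum_const, smul_eq_mul]
  rw [hsplit]
  ring_nf
  ring_nf at hbase
  omega

lemma my_sum_ub (S : Finset ℕ) (N : ℕ) (h : ∀ x ∈ S, x < N) :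
    2 * (∑ x ∈ S, x) + S.card * S.card + S.card ≤ 2 * S.card * N := by
  classical
  rcases S.eq_empty_or_nonempty with rfl | hne
  · simp
  have hN : 1 ≤ N := by obtain ⟨x, hx⟩ := hne; have := h x hx; omega
  have hinj : Set.InjOn (fun x => N - 1 - x) S := by
    intro x hx y hy hxy
    have := h x hx; have := h y hy; simp only [] at hxy; omega
  have hcard : (S.image (fun x => N - 1 - x)).card = S.card := Finset.card_image_of_injOn hinj
  have hsum : ∑ y ∈ S.image (fun x => N - 1 - x), y = ∑ x ∈ S, (N - 1 - x) :=
    Finset.sum_image (fun x hx y hy hxy => hinj hx hy hxy)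
  have hbase := my_sum_sq_le (S.image (fun x => N - 1 - x))
  rw [hcard, hsum] at hbase
  have hsplit : (∑ x ∈ S, (N - 1 - x)) + ∑ x ∈ S, x + S.card = S.card * N := by
    have h1 : ∑ x ∈ S, ((N - 1 - x) + x + 1) = ∑ x ∈ S, N :=
      Finset.sum_congr rfl (fun x hx => by have := h x hx; omega)
    have h2 : ∑ x ∈ S, ((N - 1 - x) + x + 1)
        = (∑ x ∈ S, (N - 1 - x)) + (∑ x ∈ S, x) + S.card := by
      rw [Finset.sum_add_distrib, Finset.sum_add_distrib]; simp
    rw [← h2, h1, Finset.sum_const, smul_eq_mul]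
  ring_nf
  ring_nf at hbase hsplit
  omega

lemma my_finsum_val_lb {r : ℕ} (S : Finset (Fin r)) (ℓ : ℕ) (h : ∀ x ∈ S, ℓ ≤ (x : ℕ)) :
    2 * ℓ * S.card + S.card * S.card ≤ 2 * (∑ x ∈ S, (x : ℕ)) + S.card := by
  classical
  have hinj : Function.Injective (fun x : Fin r => (x : ℕ)) := Fin.val_injective
  have hcard : (S.image (fun x : Fin r => (x : ℕ))).card = S.card :=
    Finset.card_image_of_injective _ hinj
  have hsum : ∑ y ∈ S.image (fun x : Fin r => (x : ℕ)), y = ∑ x ∈ S, (x : ℕ) :=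
    Finset.sum_image (fun x _ y _ hxy => hinj hxy)
  have := my_sum_lb (S.image (fun x : Fin r => (x : ℕ))) ℓ (by
    intro y hy
    simp only [Finset.mem_image] at hy
    obtain ⟨x, hx, rfl⟩ := hy
    exact h x hx)
  rw [hcard, hsum] at this
  exact this

lemma my_finsum_val_ub {r : ℕ} (S : Finset (Fin r)) (N : ℕ) (h : ∀ x ∈ S, (x : ℕ) < N) :
    2 * (∑ x ∈ S, (x : ℕ)) + S.card * S.card + S.card ≤ 2 * S.card * N := by
  classical
  have hinj : Function.Injective (fun x : Fin r => (x : ℕ)) := Fin.val_injective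
  have hcard : (S.image (fun x : Fin r => (x : ℕ))).card = S.card :=
    Finset.card_image_of_injective _ hinj
  have hsum : ∑ y ∈ S.image (fun x : Fin r => (x : ℕ)), y = ∑ x ∈ S, (x : ℕ) :=
    Finset.sum_image (fun x _ y _ hxy => hinj hxy)
  have := my_sum_ub (S.image (fun x : Fin r => (x : ℕ))) N (by
    intro y hy
    simp only [Finset.mem_image] at hy
    obtain ⟨x, hx, rfl⟩ := hy
    exact h x hx)
  rw [hcard, hsum] at this
  exact this

lemma my_trace_eq {r : ℕ} {A : Matrix (Fin r) (Fin r) ℂ} {μ : Fin r → ℝ}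
    (h : HasEigenvalues A μ) : A.trace = ∑ i, ((μ i : ℝ) : ℂ) := by
  rw [Matrix.trace_eq_sum_roots_charpoly, h.2]
  have h1 : (∏ i, (X - Polynomial.C ((μ i : ℝ) : ℂ)))
      = ((Finset.univ.val.map fun i => ((μ i : ℝ) : ℂ)).map fun a => X - Polynomial.C a).prod := by
    rw [Multiset.map_map]; rfl
  rw [h1, Polynomial.roots_multiset_prod_X_sub_C]
  rfl

lemma my_tau_sum {r d : ℕ} (I : Finset (Fin r)) (h : I.card = d) :
    ∑ m : Fin d, tauSeq I h m
      = (∑ i ∈ I, ((i : ℕ) : ℝ)) - ∑ m : Fin d, ((m : ℕ) : ℝ) := by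
  unfold tauSeq
  have hrev : ∑ m : Fin d,
      ((((I.orderIsoOfFin h m.rev : Fin r) : ℕ) : ℝ) - ((m.rev : ℕ) : ℝ))
      = ∑ m : Fin d, ((((I.orderIsoOfFin h m : Fin r) : ℕ) : ℝ) - ((m : ℕ) : ℝ)) :=
    Fintype.sum_bijective Fin.rev Fin.rev_bijective _ _ (fun m => rfl)
  rw [hrev, Finset.sum_sub_distrib]
  congr 1
  have hco : ∀ m : Fin d, ((I.orderIsoOfFin h m : Fin r) : ℕ)
      = ((I.orderEmbOfFin h m : Fin r) : ℕ) := by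
    intro m; rw [Finset.coe_orderIsoOfFin_apply]
  simp_rw [hco]
  exact my_sum_orderEmbOfFin I h (fun x => ((x : ℕ) : ℝ))

lemma my_omega_sum {r : ℕ} (ℓ : ℕ) (I : Finset (Fin r)) :
    ∑ a ∈ I, omegaVec r ℓ a = ((I.filter (fun a : Fin r => (a : ℕ) < ℓ)).card : ℝ) := by
  classical
  unfold omegaVec
  rw [← Finset.sum_filter (fun a : Fin r => (a : ℕ) < ℓ) (fun _ => (1 : ℝ))]
  simp

lemma my_tau_singleton {r : ℕ} (x : Fin r) (h : ({x} : Finset (Fin r)).card = 1) :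
    tauSeq {x} h = fun _ => ((x : ℕ) : ℝ) := by
  funext m
  unfold tauSeq
  have h1 : ((({x} : Finset (Fin r)).orderIsoOfFin h m.rev : Fin r)) = x := by
    have := ({x} : Finset (Fin r)).orderEmbOfFin_mem h m.rev
    rw [Finset.coe_orderIsoOfFin_apply]
    simpa using this
  have h2 : ((m.rev : ℕ)) = 0 := by omega
  rw [h1, h2]
  simp

/- ### per-set natural number bounds -/

lemma my_I_bound {r : ℕ} (S : Finset (Fin r)) (ℓ d : ℕ) (hcard : S.card = d) :
    2 * ℓ * (d - (S.filter (fun x : Fin r => (x : ℕ) < ℓ)).card)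
      + (d - (S.filter (fun x : Fin r => (x : ℕ) < ℓ)).card)
        * (d - (S.filter (fun x : Fin r => (x : ℕ) < ℓ)).card)
      + (S.filter (fun x : Fin r => (x : ℕ) < ℓ)).card
        * (S.filter (fun x : Fin r => (x : ℕ) < ℓ)).card
      ≤ 2 * (∑ x ∈ S, (x : ℕ)) + d := by
  classical
  have hsplit : (∑ x ∈ S.filter (fun a : Fin r => (a : ℕ) < ℓ), (x : ℕ))
      + (∑ x ∈ S.filter (fun a : Fin r => ¬ (a : ℕ) < ℓ), (x : ℕ))
      = ∑ x ∈ S, (x : ℕ) :=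
    Finset.sum_filter_add_sum_filter_not _ _ _
  have hcards : (S.filter (fun a : Fin r => (a : ℕ) < ℓ)).card
      + (S.filter (fun a : Fin r => ¬ (a : ℕ) < ℓ)).card = d := by
    rw [Finset.card_filter_add_card_filter_not, hcard]
  have hlb := my_finsum_val_lb (S.filter (fun a : Fin r => ¬ (a : ℕ) < ℓ)) ℓ
    (by intro x hx; have := (Finset.mem_filter.mp hx).2; omega)
  have hlb0 := my_finsum_val_lb (S.filter (fun a : Fin r => (a : ℕ) < ℓ)) 0
    (by intro x hx; omega)
  have hdd : d - (S.filter (fun x : Fin r => (x : ℕ) < ℓ)).card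
      = (S.filter (fun a : Fin r => ¬ (a : ℕ) < ℓ)).card := by omega
  rw [hdd]
  omega

lemma my_K_bound {r : ℕ} (K : Finset (Fin r)) (ℓ : ℕ) :
    2 * (∑ x ∈ K, (x : ℕ))
      + (K.filter (fun a : Fin r => (a : ℕ) < ℓ)).card
        * (K.filter (fun a : Fin r => (a : ℕ) < ℓ)).card
      + (K.filter (fun a : Fin r => (a : ℕ) < ℓ)).card
      + (K.filter (fun a : Fin r => ¬ (a : ℕ) < ℓ)).card
        * (K.filter (fun a : Fin r => ¬ (a : ℕ) < ℓ)).card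
      + (K.filter (fun a : Fin r => ¬ (a : ℕ) < ℓ)).card
      ≤ 2 * (K.filter (fun a : Fin r => (a : ℕ) < ℓ)).card * ℓ
      + 2 * (K.filter (fun a : Fin r => ¬ (a : ℕ) < ℓ)).card * r := by
  classical
  have hsplit : (∑ x ∈ K.filter (fun a : Fin r => (a : ℕ) < ℓ), (x : ℕ))
      + (∑ x ∈ K.filter (fun a : Fin r => ¬ (a : ℕ) < ℓ), (x : ℕ))
      = ∑ x ∈ K, (x : ℕ) :=
    Finset.sum_filter_add_sum_filter_not _ _ _
  have hub1 := my_finsum_val_ub (K.filter (fun a : Fin r => (a : ℕ) < ℓ)) ℓ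
    (by intro x hx; exact (Finset.mem_filter.mp hx).2)
  have hub2 := my_finsum_val_ub (K.filter (fun a : Fin r => ¬ (a : ℕ) < ℓ)) r
    (by intro x hx; exact x.2)
  omega

/- ### Forward combinatorial lemma -/

set_option maxHeartbeats 1000000 in
lemma my_forward {r s d ℓ : ℕ} (hs : 3 ≤ s) (hd1 : 1 ≤ d) (h1 : 1 ≤ ℓ)
    (I : Fin (s - 1) → Finset (Fin r)) (K : Finset (Fin r))
    (cardI : ∀ j, (I j).card = d) (cardK : K.card = d)
    (htr : ∑ j, ∑ m : Fin d, tauSeq (I j) (cardI j) m = ∑ m : Fin d, tauSeq K cardK m)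
    (heq : ∑ j, ∑ a ∈ I j, omegaVec r ℓ a = ∑ k ∈ K, omegaVec r ℓ k)
    (hcon : r ≤ (s - 1) * ℓ) : False := by
  classical
  have hecard : (Finset.univ : Finset (Fin (s - 1))).card = s - 1 := by simp
  set aN : Fin (s - 1) → ℕ :=
    fun j => ((I j).filter (fun a : Fin r => (a : ℕ) < ℓ)).card with haN
  set bN : ℕ := (K.filter (fun a : Fin r => (a : ℕ) < ℓ)).card with hbN
  set cN : ℕ := (K.filter (fun a : Fin r => ¬ (a : ℕ) < ℓ)).card with hcN
  have hbcd : bN + cN = d := by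
    rw [hbN, hcN, Finset.card_filter_add_card_filter_not, cardK]
  have hab : ∑ j, aN j = bN := by
    have h0 : ∑ j, ((aN j : ℕ) : ℝ) = (bN : ℝ) := by
      rw [hbN, ← my_omega_sum, ← heq]
      exact Finset.sum_congr rfl fun j _ => (my_omega_sum ℓ (I j)).symm
    exact_mod_cast h0
  have hIbound : ∀ j, 2 * ℓ * (d - aN j) + (d - aN j) * (d - aN j) + aN j * aN j
      ≤ 2 * (∑ x ∈ I j, (x : ℕ)) + d := fun j => my_I_bound (I j) ℓ d (cardI j)
  have hKbound : 2 * (∑ x ∈ K, (x : ℕ)) + bN * bN + bN + cN * cN + cN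
      ≤ 2 * bN * ℓ + 2 * cN * r := my_K_bound K ℓ
  have hadle : ∀ j, aN j ≤ d := by
    intro j
    have h0 : aN j + ((I j).filter (fun a : Fin r => ¬ (a : ℕ) < ℓ)).card = d := by
      rw [haN, Finset.card_filter_add_card_filter_not, cardI]
    omega
  -- real data
  set dR : ℝ := (d : ℝ) with hdR
  set eR : ℝ := ((s - 1 : ℕ) : ℝ) with heR
  set ℓR : ℝ := (ℓ : ℝ) with hℓR
  set bR : ℝ := (bN : ℝ) with hbR
  set cR : ℝ := (cN : ℝ) with hcR
  set SI : Fin (s - 1) → ℝ := fun j => ∑ x ∈ I j, ((x : ℕ) : ℝ) with hSI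
  set SK : ℝ := ∑ x ∈ K, ((x : ℕ) : ℝ) with hSK
  set D : ℝ := ∑ m : Fin d, ((m : ℕ) : ℝ) with hD
  have hD2 : 2 * D + dR = dR * dR := by
    have h0 : D = ((∑ m ∈ Finset.range d, m : ℕ) : ℝ) := by
      rw [hD]; push_cast
      exact Fin.sum_univ_eq_sum_range (fun i => (i : ℝ)) d
    have hg := my_gauss d
    rw [h0, hdR]
    exact_mod_cast hg
  have htrR : ∑ j, SI j = SK + eR * D - D := by
    have h0 : ∀ j, ∑ m : Fin d, tauSeq (I j) (cardI j) m = SI j - D := fun j => my_tau_sum _ _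
    have hk : ∑ m : Fin d, tauSeq K cardK m = SK - D := my_tau_sum _ _
    rw [hk, Finset.sum_congr rfl (fun j _ => h0 j), Finset.sum_sub_distrib,
      Finset.sum_const, hecard, nsmul_eq_mul] at htr
    rw [heR]
    push_cast at htr ⊢
    linarith [htr]
  have hjR : ∀ j : Fin (s - 1), 2 * ℓR * dR + dR * dR - dR
      ≤ 2 * SI j + (2 * (dR - 1) + 2 * ℓR) * ((aN j : ℕ) : ℝ) := by
    intro j
    have hcast : 2 * ℓR * (dR - (aN j : ℝ)) + (dR - (aN j : ℝ)) * (dR - (aN j : ℝ))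
        + (aN j : ℝ) * (aN j : ℝ) ≤ 2 * SI j + dR := by
      have hR : ((2 * ℓ * (d - aN j) + (d - aN j) * (d - aN j) + aN j * aN j : ℕ) : ℝ)
          ≤ ((2 * (∑ x ∈ I j, (x : ℕ)) + d : ℕ) : ℝ) := by exact_mod_cast hIbound j
      push_cast [Nat.cast_sub (hadle j)] at hR
      rw [hSI, hdR, hℓR]
      nlinarith [hR]
    have haa : ((aN j : ℕ) : ℝ) ≤ ((aN j : ℕ) : ℝ) * ((aN j : ℕ) : ℝ) := by
      have h0 : aN j ≤ aN j * aN j := by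
        rcases Nat.eq_zero_or_pos (aN j) with h | h
        · simp [h]
        · exact Nat.le_mul_of_pos_left _ h
      exact_mod_cast h0
    nlinarith [hcast, haa]
  have habR : ∑ j, ((aN j : ℕ) : ℝ) = bR := by rw [hbR]; exact_mod_cast hab
  have hsum1 : eR * (2 * ℓR * dR + dR * dR - dR)
      ≤ 2 * (∑ j, SI j) + (2 * (dR - 1) + 2 * ℓR) * bR := by
    have h0 := Finset.sum_le_sum (fun j (_ : j ∈ Finset.univ) => hjR j)
    rw [Finset.sum_const, hecard, nsmul_eq_mul, Finset.sum_add_distrib, ← Finset.mul_sum,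
      ← Finset.mul_sum, habR] at h0
    rw [heR]
    push_cast at h0 ⊢
    linarith [h0]
  have hKR : 2 * SK + bR * bR + bR + cR * cR + cR ≤ 2 * bR * ℓR + 2 * cR * (r : ℝ) := by
    have hR : ((2 * (∑ x ∈ K, (x : ℕ)) + bN * bN + bN + cN * cN + cN : ℕ) : ℝ)
        ≤ ((2 * bN * ℓ + 2 * cN * r : ℕ) : ℝ) := by exact_mod_cast hKbound
    push_cast at hR
    rw [hSK, hbR, hcR, hℓR]
    linarith [hR]
  have hbcR : bR + cR = dR := by rw [hbR, hcR, hdR]; exact_mod_cast hbcd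
  have hrcR : (r : ℝ) ≤ eR * ℓR := by rw [heR, hℓR]; exact_mod_cast hcon
  have hd1R : 1 ≤ dR := by rw [hdR]; exact_mod_cast hd1
  have he2R : 2 ≤ eR := by rw [heR]; exact_mod_cast (by omega : 2 ≤ s - 1)
  have hℓ1R : 1 ≤ ℓR := by rw [hℓR]; exact_mod_cast h1
  have hb0 : 0 ≤ bR := by rw [hbR]; positivity
  have hc0 : 0 ≤ cR := by rw [hcR]; positivity
  have hcc : cR ≤ cR * cR := by
    rw [hcR]
    have h0 : cN ≤ cN * cN := by
      rcases Nat.eq_zero_or_pos cN with h | h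
      · simp [h]
      · exact Nat.le_mul_of_pos_left _ h
    exact_mod_cast h0
  have hcube : 0 ≤ ℓR * bR * (eR - 2) :=
    mul_nonneg (mul_nonneg (by linarith) hb0) (by linarith)
  have key1 : 2 * cR * (r : ℝ) ≤ 2 * cR * (eR * ℓR) :=
    mul_le_mul_of_nonneg_left hrcR (by linarith)
  have hmain : eR * (2 * ℓR * dR + dR * dR - dR)
      ≤ 2 * SK + (eR - 1) * (dR * dR - dR) + (2 * (dR - 1) + 2 * ℓR) * bR := by
    have h2si : 2 * (∑ j, SI j) = 2 * SK + (eR - 1) * (dR * dR - dR) := by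
      rw [htrR]; nlinarith [hD2]
    linarith [hsum1, h2si.le, h2si.symm.le]
  have hd_eq : dR = bR + cR := hbcR.symm
  rw [hd_eq] at hmain hd1R
  nlinarith [hmain, hKR, key1, hcube, hcc, hd1R, hb0, hc0, hℓ1R, he2R]

/- ### backward direction helpers -/

lemma my_hasEig_const (c : ℝ) :
    HasEigenvalues (Matrix.diagonal (fun _ : Fin 1 => (c : ℂ))) (fun _ : Fin 1 => c) := by
  constructor
  · apply Matrix.isHermitian_diagonal_of_self_adjoint
    simp [_root_.IsSelfAdjoint, funext_iff, Complex.star_def, Complex.conj_ofReal]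
  · have h1 : (Matrix.diagonal (fun _ : Fin 1 => (c : ℂ))).charpoly
        = X - Polynomial.C (c : ℂ) := by
      rw [show (Matrix.diagonal fun _ : Fin 1 => (c : ℂ)).charpoly
          = (Matrix.charmatrix (Matrix.diagonal fun _ : Fin 1 => (c : ℂ))).det from rfl,
        Matrix.det_fin_one, Matrix.charmatrix_apply_eq, Matrix.diagonal_apply_eq]
    rw [h1, Fin.prod_univ_one]

lemma my_antitone_fin_one (f : Fin 1 → ℝ) : Antitone f := by
  intro a b _
  rw [Subsingleton.elim a b]

/- ### Main theorem -/


/-- for `1 ≤ ℓ ≤ r`, there is a Horn datum whose Horn inequality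
holds with equality at `x_ℓ = (ω_ℓ,…,ω_ℓ,ω_ℓ)` iff `(s-1)·ℓ < r`. -/
theorem stmt8 (r s : ℕ) (hr : 1 ≤ r) (hs : 3 ≤ s) (ℓ : ℕ) (h1 : 1 ≤ ℓ) (h2 : ℓ ≤ r) :
    (∃ H : HornDatum r s,
      ∑ j, ∑ a ∈ H.I j, omegaVec r ℓ a = ∑ k ∈ H.K, omegaVec r ℓ k) ↔
    (s - 1) * ℓ < r := by
  classical
  constructor
  · rintro ⟨H, heq⟩
    by_contra hcon
    push_neg at hcon
    obtain ⟨hIanti, hKanti, A, B, hA, hB, hsumAB⟩ := H.mem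
    have htrC : ∑ j, ∑ m : Fin H.d, ((tauSeq (H.I j) (H.cardI j) m : ℝ) : ℂ)
        = ∑ m : Fin H.d, ((tauSeq H.K H.cardK m : ℝ) : ℂ) := by
      calc ∑ j, ∑ m : Fin H.d, ((tauSeq (H.I j) (H.cardI j) m : ℝ) : ℂ)
          = ∑ j, (A j).trace :=
            Finset.sum_congr rfl fun j _ => (my_trace_eq (hA j)).symm
        _ = (∑ j, A j).trace := (Matrix.trace_sum _ _).symm
        _ = B.trace := by rw [hsumAB]
        _ = _ := my_trace_eq hB
    have htr : ∑ j, ∑ m : Fin H.d, tauSeq (H.I j) (H.cardI j) m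
        = ∑ m : Fin H.d, tauSeq H.K H.cardK m := by
      have h0 := htrC
      push_cast at h0
      exact_mod_cast h0
    exact my_forward hs H.one_le_d h1 H.I H.K H.cardI H.cardK htr heq hcon
  · intro hlt
    have hs1 : 2 ≤ s - 1 := by omega
    have hle : ℓ ≤ (s - 1) * ℓ := Nat.le_mul_of_pos_left ℓ (by omega)
    have hℓr : ℓ < r := by omega
    have hkr : (s - 1) * ℓ < r := hlt
    have h1r : 1 < r := by
      have : 2 * 1 ≤ (s - 1) * ℓ := Nat.mul_le_mul hs1 h1
      omega
    have hIval : ∀ (h : ({(⟨ℓ, hℓr⟩ : Fin r)} : Finset (Fin r)).card = 1),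
        tauSeq ({(⟨ℓ, hℓr⟩ : Fin r)} : Finset (Fin r)) h = fun _ => ((ℓ : ℕ) : ℝ) := by
      intro h
      rw [my_tau_singleton]
    have hKval : ∀ (h : ({(⟨(s-1)*ℓ, hkr⟩ : Fin r)} : Finset (Fin r)).card = 1),
        tauSeq ({(⟨(s-1)*ℓ, hkr⟩ : Fin r)} : Finset (Fin r)) h
          = fun _ => (((s-1)*ℓ : ℕ) : ℝ) := by
      intro h
      rw [my_tau_singleton]
    have hmem : memC 1 s (fun _ => tauSeq ({(⟨ℓ, hℓr⟩ : Fin r)} : Finset (Fin r))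
          (Finset.card_singleton _),
        tauSeq ({(⟨(s-1)*ℓ, hkr⟩ : Fin r)} : Finset (Fin r)) (Finset.card_singleton _)) := by
      refine ⟨fun j => my_antitone_fin_one _, my_antitone_fin_one _,
        fun _ => Matrix.diagonal (fun _ : Fin 1 => (((ℓ : ℕ) : ℝ) : ℂ)),
        Matrix.diagonal (fun _ : Fin 1 => ((((s-1)*ℓ : ℕ) : ℝ) : ℂ)), ?_, ?_, ?_⟩
      · intro j
        simp only [hIval]
        exact my_hasEig_const _
      · simp only [hKval]
        exact my_hasEig_const _
      · ext i j
        by_cases hij : i = j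
        · subst hij
          simp only [Matrix.sum_apply, Matrix.diagonal_apply_eq, Finset.sum_const,
            Finset.card_univ, Fintype.card_fin, nsmul_eq_mul]
          push_cast
          ring
        · simp [Matrix.sum_apply, Matrix.diagonal_apply_ne _ hij]
    refine ⟨⟨1, le_refl 1, h1r, fun _ => ({(⟨ℓ, hℓr⟩ : Fin r)} : Finset (Fin r)),
      ({(⟨(s-1)*ℓ, hkr⟩ : Fin r)} : Finset (Fin r)),
      fun _ => Finset.card_singleton _, Finset.card_singleton _, hmem⟩, ?_⟩
    simp only [Finset.sum_singleton]
    have hω1 : omegaVec r ℓ (⟨ℓ, hℓr⟩ : Fin r) = 0 := by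
      simp [omegaVec]
    have hω2 : omegaVec r ℓ (⟨(s-1)*ℓ, hkr⟩ : Fin r) = 0 := by
      simp only [omegaVec]
      rw [if_neg (by omega)]
    rw [hω1, hω2]
    simp
end
end
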